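/- For even n ≥ 4, the eigenvalues of the adjacency-diametrical matrix of the cycle C_n are 2cos(2πk/n) + (n/2)cos(πk) for k = 1, 2, ..., n. -/
import Mathlib


open Polynomial Matrix

lemma charpoly_eq_of_conj {m : Type*} [Fintype m] [DecidableEq m] {K : Type*} [Field K]
    (P A B : Matrix m m K) (hP : P.det ≠ 0) (h : P * A = B * P) :
    A.charpoly = B.charpoly := by
  have h1 : P.map (C : K →+* K[X]) * A.charmatrix = B.charmatrix * P.map (C : K →+* K[X]) := by
    unfold charmatrix
    rw [mul_sub, sub_mul]
    congr 1
    · simp only [scalar_apply]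
      ext i j
      rw [mul_diagonal, diagonal_mul, mul_comm]
    · simp only [RingHom.mapMatrix_apply]
      rw [← Matrix.map_mul, h, Matrix.map_mul]
  have h2 := congrArg Matrix.det h1
  rw [det_mul, det_mul] at h2
  have h3 : (P.map (C : K →+* K[X])).det = C P.det := (RingHom.map_det (C : K →+* K[X]) P).symm
  rw [h3, mul_comm (C P.det)] at h2
  refine mul_right_cancel₀ (fun hc => hP ?_) h2
  exact (map_eq_zero_iff C C_injective).mp hc

lemma mod_helper {n a b d : ℕ} (ha : a < n) (hb : b < n) (hd : d < n) :
    (b + n - a) % n = d ↔ b = (a + d) % n := by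
  rcases le_or_gt a b with h | h
  · have h1 : (b + n - a) % n = b - a := by
      have he : b + n - a = (b - a) + n := by omega
      rw [he, Nat.add_mod_right, Nat.mod_eq_of_lt (by omega)]
    rw [h1]
    rcases lt_or_ge (a + d) n with h2 | h2
    · rw [Nat.mod_eq_of_lt h2]; omega
    · rw [Nat.mod_eq_sub_mod h2, Nat.mod_eq_of_lt (by omega)]; omega
  · have h1 : (b + n - a) % n = b + n - a := Nat.mod_eq_of_lt (by omega)
    rw [h1]
    rcases lt_or_ge (a + d) n with h2 | h2
    · rw [Nat.mod_eq_of_lt h2]; omega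
    · rw [Nat.mod_eq_sub_mod h2, Nat.mod_eq_of_lt (by omega)]; omega

lemma add_mod_inj {n i a b : ℕ} (ha : a < n) (hb : b < n)
    (h : (i + a) % n = (i + b) % n) : a = b := by
  have h2 : a ≡ b [MOD n] := Nat.ModEq.add_left_cancel' i h
  rwa [Nat.ModEq, Nat.mod_eq_of_lt ha, Nat.mod_eq_of_lt hb] at h2

/-- The adjacency-diametrical matrix of the cycle `Cₙ` for even `n`: a circulant matrix whose
first row has entries `1` in positions `1` and `n-1` and entry `n/2` in position `n/2`. -/
noncomputable def cycleADEven (n : ℕ) : Matrix (Fin n) (Fin n) ℝ := fun i j =>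
  let k := (j.val + n - i.val) % n
  if k = 1 ∨ k = n - 1 then 1
  else if k = n / 2 then (n : ℝ) / 2
  else 0

/-- For even `n ≥ 4`, the eigenvalues (with multiplicity, i.e. the roots of the characteristic
polynomial) of `AD(Cₙ)` are `2cos(2πk/n) + (n/2)cos(πk)` for `k = 1, …, n`. -/
theorem eigenvalues_cycleAD_even (n : ℕ) (hn : 4 ≤ n) (he : Even n) :
    (cycleADEven n).charpoly.roots =
      Multiset.map
        (fun k : ℕ =>
          2 * Real.cos (2 * Real.pi * k / n) + (n : ℝ) / 2 * Real.cos (Real.pi * k))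
        (Finset.Icc 1 n).val := by
  have hn0 : n ≠ 0 := by omega
  have npos : 0 < n := by omega
  set f : ℕ → ℝ := fun k =>
    2 * Real.cos (2 * Real.pi * k / n) + (n : ℝ) / 2 * Real.cos (Real.pi * k) with hfdef
  set ω : ℂ := Complex.exp (2 * Real.pi * Complex.I / n) with hωdef
  have hprim : IsPrimitiveRoot ω n := Complex.isPrimitiveRoot_exp n hn0
  have hω1 : ω ^ n = 1 := hprim.pow_eq_one
  have hpowmod : ∀ a : ℕ, ω ^ a = ω ^ (a % n) := by
    intro a
    conv_lhs => rw [← Nat.div_add_mod a n]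
    rw [pow_add, pow_mul, hω1, one_pow, one_mul]
  have hpowmul : ∀ a b : ℕ, ω ^ (a % n * b) = ω ^ (a * b) := by
    intro a b
    rw [pow_mul, pow_mul, ← hpowmod a]
  have hncC : (n : ℂ) ≠ 0 := Nat.cast_ne_zero.mpr hn0
  have hpow_exp : ∀ m : ℕ, ω ^ m = Complex.exp (((2 * Real.pi * m / n : ℝ) : ℂ) * Complex.I) := by
    intro m
    rw [hωdef, ← Complex.exp_nat_mul]
    congr 1
    push_cast
    field_simp
  -- the eigenvalue identity
  have hμ : ∀ k : ℕ, ω ^ k + ω ^ ((n - 1) * k) + (n : ℂ) / 2 * ω ^ (n / 2 * k) = ((f k : ℝ) : ℂ) := by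
    intro k
    have h3 : ω ^ (n / 2 * k) = ((Real.cos (Real.pi * k) : ℝ) : ℂ) := by
      have hex : ((2 * Real.pi * (↑(n / 2 * k) : ℝ) / n : ℝ) : ℂ) = ((Real.pi * k : ℝ) : ℂ) := by
        have h2n : ((n / 2 : ℕ) : ℂ) * 2 = (n : ℂ) := by
          exact_mod_cast congrArg (Nat.cast : ℕ → ℂ) (Nat.div_mul_cancel he.two_dvd)
        push_cast
        rw [div_eq_iff (Nat.cast_ne_zero.mpr hn0)]
        linear_combination ((Real.pi : ℂ) * (k : ℕ)) * h2n
      rw [hpow_exp, hex, Complex.exp_mul_I]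
      rw [← Complex.ofReal_cos, ← Complex.ofReal_sin]
      rw [show Real.pi * (k : ℝ) = (k : ℝ) * Real.pi by ring, Real.sin_nat_mul_pi]
      simp
    have e1 : ω ^ k = Complex.exp (((2 * Real.pi * k / n : ℝ) : ℂ) * Complex.I) := hpow_exp k
    have e2 : ω ^ ((n - 1) * k) = Complex.exp (-(((2 * Real.pi * k / n : ℝ) : ℂ) * Complex.I)) := by
      have hmul : ω ^ ((n - 1) * k) * ω ^ k = 1 := by
        have hk : k ≤ n * k := Nat.le_mul_of_pos_left k npos
        have hnk : (n - 1) * k + k = n * k := by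
          rw [Nat.sub_mul, one_mul]; omega
        rw [← pow_add, hnk, pow_mul, hω1, one_pow]
      rw [Complex.exp_neg, ← e1]
      exact eq_inv_of_mul_eq_one_left hmul
    have h12 : ω ^ k + ω ^ ((n - 1) * k) = ((2 * Real.cos (2 * Real.pi * k / n) : ℝ) : ℂ) := by
      rw [e1, e2]
      rw [Complex.ofReal_mul, Complex.ofReal_cos, Complex.ofReal_ofNat]
      rw [Complex.cos]
      ring
    rw [h12, h3, hfdef]
    push_cast
    ring
  -- matrices
  set F : Matrix (Fin n) (Fin n) ℂ := Matrix.of fun i k : Fin n => ω ^ (i.val * k.val) with hFdef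
  set μ : Fin n → ℂ := fun k => ((f k.val : ℝ) : ℂ) with hμdef
  have hdetF : F.det ≠ 0 := by
    have hFv : F = Matrix.vandermonde fun i : Fin n => ω ^ i.val := by
      ext i k
      simp [hFdef, Matrix.vandermonde, pow_mul]
    rw [hFv]
    refine Matrix.det_vandermonde_ne_zero_iff.mpr ?_
    intro a b hab
    exact Fin.ext (hprim.pow_inj a.isLt b.isLt hab)
  have hconj : F * Matrix.diagonal μ = (cycleADEven n).map (Complex.ofRealHom) * F := by
    ext i k
    rw [Matrix.mul_diagonal, Matrix.mul_apply]
    -- set up the three special columns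
    have h1lt : 1 < n := by omega
    have hclt : n - 1 < n := by omega
    have hhlt : n / 2 < n := by omega
    set j1 : Fin n := ⟨(i.val + 1) % n, Nat.mod_lt _ npos⟩ with hj1def
    set j2 : Fin n := ⟨(i.val + (n - 1)) % n, Nat.mod_lt _ npos⟩ with hj2def
    set j3 : Fin n := ⟨(i.val + n / 2) % n, Nat.mod_lt _ npos⟩ with hj3def
    have hd12 : j1 ≠ j2 := by
      intro hcon
      have := add_mod_inj h1lt hclt (congrArg Fin.val hcon)
      omega
    have hd13 : j1 ≠ j3 := by
      intro hcon
      have := add_mod_inj h1lt hhlt (congrArg Fin.val hcon)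
      omega
    have hd23 : j2 ≠ j3 := by
      intro hcon
      have := add_mod_inj hclt hhlt (congrArg Fin.val hcon)
      omega
    have hsplit : ∀ j : Fin n, (cycleADEven n i j : ℝ) =
        (if j = j1 then (1 : ℝ) else 0) + (if j = j2 then (1 : ℝ) else 0) +
          (if j = j3 then (n : ℝ) / 2 else 0) := by
      intro j
      have e1 : ((j.val + n - i.val) % n = 1) ↔ j = j1 := by
        rw [Fin.ext_iff]
        exact mod_helper i.isLt j.isLt h1lt
      have e2 : ((j.val + n - i.val) % n = n - 1) ↔ j = j2 := by
        rw [Fin.ext_iff]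
        exact mod_helper i.isLt j.isLt hclt
      have e3 : ((j.val + n - i.val) % n = n / 2) ↔ j = j3 := by
        rw [Fin.ext_iff]
        exact mod_helper i.isLt j.isLt hhlt
      show (if (j.val + n - i.val) % n = 1 ∨ (j.val + n - i.val) % n = n - 1 then (1 : ℝ)
          else if (j.val + n - i.val) % n = n / 2 then (n : ℝ) / 2 else 0) = _
      simp only [e1, e2, e3]
      by_cases h1 : j = j1
      · simp [h1, hd12, hd13]
      · by_cases h2 : j = j2
        · simp [h1, h2, hd23, Ne.symm hd12]
        · by_cases h3 : j = j3
          · simp [h1, h2, h3, Ne.symm hd13, Ne.symm hd23]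
          · simp [h1, h2, h3]
    have hsum : (∑ j : Fin n, ((cycleADEven n) i j : ℂ) * ω ^ (j.val * k.val)) =
        ω ^ (i.val * k.val) * μ k := by
      have step : ∀ j : Fin n, ((cycleADEven n) i j : ℂ) * ω ^ (j.val * k.val) =
          ((if j = j1 then (1 : ℂ) else 0) + (if j = j2 then (1 : ℂ) else 0) +
            (if j = j3 then (n : ℂ) / 2 else 0)) * ω ^ (j.val * k.val) := by
        intro j
        congr 1
        rw [hsplit j]
        push_cast [apply_ite ((↑·) : ℝ → ℂ)]
        norm_num
      rw [Finset.sum_congr rfl fun j _ => step j]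
      simp only [add_mul, Finset.sum_add_distrib, ite_mul, one_mul, zero_mul,
        Finset.sum_ite_eq', Finset.mem_univ, if_true]
      have hj1 : ω ^ (j1.val * k.val) = ω ^ (i.val * k.val) * ω ^ k.val := by
        show ω ^ ((i.val + 1) % n * k.val) = _
        rw [hpowmul, add_mul, one_mul, pow_add]
      have hj2 : ω ^ (j2.val * k.val) = ω ^ (i.val * k.val) * ω ^ ((n - 1) * k.val) := by
        show ω ^ ((i.val + (n - 1)) % n * k.val) = _
        rw [hpowmul, add_mul, pow_add]
      have hj3 : ω ^ (j3.val * k.val) = ω ^ (i.val * k.val) * ω ^ (n / 2 * k.val) := by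
        show ω ^ ((i.val + n / 2) % n * k.val) = _
        rw [hpowmul, add_mul, pow_add]
      rw [hj1, hj2, hj3]
      show _ = ω ^ (i.val * k.val) * ((f k.val : ℝ) : ℂ)
      rw [← hμ k.val]
      ring
    show ω ^ (i.val * k.val) * μ k = _
    rw [← hsum]
    exact Finset.sum_congr rfl fun j _ => rfl
  have hcp : (Matrix.diagonal μ).charpoly = ((cycleADEven n).map (Complex.ofRealHom)).charpoly :=
    charpoly_eq_of_conj F _ _ hdetF hconj
  have hdiag : (Matrix.diagonal μ).charpoly = ∏ k : Fin n, (X - C (μ k)) := by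
    rw [Matrix.charpoly_of_upperTriangular _ (Matrix.blockTriangular_diagonal μ)]
    simp
  have hchar : (cycleADEven n).charpoly = ∏ k : Fin n, (X - C (f k.val)) := by
    apply Polynomial.map_injective (Complex.ofRealHom) Complex.ofReal_injective
    rw [← Matrix.charpoly_map, ← hcp, hdiag, Polynomial.map_prod]
    refine Finset.prod_congr rfl fun k _ => ?_
    simp [hμdef]
  rw [hchar]
  have hprodform : (∏ k : Fin n, (X - C (f k.val))) =
      (Multiset.map (fun a : ℝ => X - C a)
        ((Finset.univ.val : Multiset (Fin n)).map fun k : Fin n => f k.val)).prod := by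
    rw [Multiset.map_map]
    rfl
  rw [hprodform, roots_multiset_prod_X_sub_C]
  -- multiset bookkeeping
  have huniv : ((Finset.univ.val : Multiset (Fin n)).map fun k : Fin n => f k.val) =
      (Finset.range n).val.map f := by
    have h1 : (Finset.univ : Finset (Fin n)).map Fin.valEmbedding = Finset.range n := by
      rw [Fin.map_valEmbedding_univ, Nat.Iio_eq_range]
    calc ((Finset.univ.val : Multiset (Fin n)).map fun k : Fin n => f k.val)
        = ((Finset.univ.val : Multiset (Fin n)).map Fin.val).map f := by
          rw [Multiset.map_map]; rfl
      _ = ((Finset.univ : Finset (Fin n)).map Fin.valEmbedding).val.map f := rfl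
      _ = (Finset.range n).val.map f := by rw [h1]
  rw [huniv]
  have hr : Finset.range n = insert 0 (Finset.Ico 1 n) := by
    ext x; simp; omega
  have hi : Finset.Icc 1 n = insert n (Finset.Ico 1 n) := by
    ext x; simp; omega
  have h0v : (insert 0 (Finset.Ico 1 n)).val = 0 ::ₘ (Finset.Ico 1 n).val :=
    Finset.insert_val_of_notMem (by simp)
  have hnv : (insert n (Finset.Ico 1 n)).val = n ::ₘ (Finset.Ico 1 n).val :=
    Finset.insert_val_of_notMem (by simp)
  rw [hr, hi, h0v, hnv, Multiset.map_cons, Multiset.map_cons]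
  congr 1
  -- f 0 = f n
  have hc2 : 2 * Real.pi * (n : ℝ) / n = 2 * Real.pi := by field_simp
  obtain ⟨m, hm⟩ := he
  have hcn : Real.pi * (n : ℝ) = (m : ℝ) * (2 * Real.pi) := by
    rw [hm]; push_cast; ring
  simp [hfdef, hc2, Real.cos_two_pi, hcn, Real.cos_nat_mul_two_pi]
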